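/- arXiv:2101.10690 — 5 statements merged into one kernel-verified Lean document; each statement's English description precedes it below -/
import Mathlib

section
/- Let (A_n)_{n∈N} be operators on a finite-dimensional Hilbert space H with Σ_n A_n* A_n = 1, ρ a density operator on H, and set p_n := Tr(ρ A_n* A_n), ρ₁ := Σ_n A_n ρ A_n*. Then S(ρ) − S(ρ₁) ≤ H(p), where S is von Neumann entropy and H(p) := −Σ_n p_n log p_n is the Shannon entropy of the probability distribution (p_n). -/
open Matrix ComplexOrder

def IsDensity {d : Type*} [Fintype d] (ρ : Matrix d d ℂ) : Prop :=
  ρ.PosSemidef ∧ ρ.trace = 1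

open scoped Classical in
/-- Von Neumann entropy, computed from the eigenvalues of a Hermitian matrix. -/
noncomputable def vNE {d : Type*} [Fintype d] [DecidableEq d] (ρ : Matrix d d ℂ) : ℝ :=
  if h : ρ.IsHermitian then ∑ i, Real.negMulLog (h.eigenvalues i) else 0

/-!
Let `λ`, `v` be the eigenvalues and an orthonormal eigenbasis of `ρ`, and `ν`, `u` those of `ρ₁`.
The weights `b (n, i) k = |⟪u i, A n (v k)⟫|²` have column sums `∑ₙ ‖A n (v k)‖² = 1` and row sums
`‖(A n)ᴴ (u i)‖² ≤ ‖A n‖² ≤ 1`. The vector `c = b λ`, with `c (n, i) = ⟪u i, A n ρ (A n)ᴴ (u i)⟫`,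
is a probability distribution on `N × d` with marginals `p` and `ν`. As `η x = -x log x` is concave
with `η 0 = 0`, such a matrix can only increase `∑ η`, so `S(ρ) ≤ ∑ η (c (n, i))`, and
subadditivity of Shannon entropy bounds this by `H(p) + H(ν) = H(p) + S(ρ₁)`.
-/

open scoped InnerProductSpace

section ShannonEntropy

open Real

theorem ConcaveOn.le_map_sum_of_sum_le_one {ι : Type*} [Fintype ι] {s : Set ℝ} {f : ℝ → ℝ}
    (hf : ConcaveOn ℝ s f) (h0 : 0 ∈ s) (hf0 : 0 ≤ f 0) {w p : ι → ℝ} (hw : ∀ i, 0 ≤ w i)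
    (hw1 : ∑ i, w i ≤ 1) (hp : ∀ i, p i ∈ s) :
    ∑ i, w i * f (p i) ≤ f (∑ i, w i * p i) := by
  -- Jensen after putting the missing weight `1 - ∑ i, w i` on the point `0`
  have hjensen := hf.le_map_sum (t := Finset.univ)
    (w := fun o : Option ι => o.elim (1 - ∑ i, w i) w) (p := fun o : Option ι => o.elim 0 p)
    (fun o _ => by cases o <;> simp [hw, hw1]) (by simp [Fintype.sum_option])
    (fun o _ => by cases o <;> simp [h0, hp])
  simp only [Fintype.sum_option, Option.elim, smul_eq_mul, mul_zero, zero_add] at hjensen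
  nlinarith [mul_nonneg (sub_nonneg.2 hw1) hf0]

theorem sum_negMulLog_le_sum_negMulLog_mulVec {ι κ : Type*} [Fintype ι] [Fintype κ]
    {b : Matrix ι κ ℝ} (hb : ∀ i k, 0 ≤ b i k) (hcol : ∀ k, ∑ i, b i k = 1)
    (hrow : ∀ i, ∑ k, b i k ≤ 1) {x : κ → ℝ} (hx : ∀ k, 0 ≤ x k) :
    ∑ k, negMulLog (x k) ≤ ∑ i, negMulLog ((b *ᵥ x) i) :=
  calc ∑ k, negMulLog (x k) = ∑ k, ∑ i, b i k * negMulLog (x k) := by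
        simp [← Finset.sum_mul, hcol]
    _ = ∑ i, ∑ k, b i k * negMulLog (x k) := Finset.sum_comm
    _ ≤ ∑ i, negMulLog ((b *ᵥ x) i) := Finset.sum_le_sum fun i _ =>
        concaveOn_negMulLog.le_map_sum_of_sum_le_one (Set.mem_Ici.2 le_rfl) (by simp) (hb i)
          (hrow i) hx

theorem negMulLog_le_mul_sub_sub_mul_log_sub_mul_log {c x y : ℝ} (hc : 0 ≤ c) (hx : c ≤ x)
    (hy : c ≤ y) : negMulLog c ≤ x * y - c - c * log x - c * log y := by
  obtain rfl | hc := hc.eq_or_lt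
  · simpa using mul_nonneg hx hy
  have hx0 : 0 < x := hc.trans_le hx
  have hy0 : 0 < y := hc.trans_le hy
  have hlog : log (x * y / c) = log x + log y - log c := by
    rw [log_div (by positivity) hc.ne', log_mul hx0.ne' hy0.ne']
  have := mul_le_mul_of_nonneg_left (log_le_sub_one_of_pos (by positivity : 0 < x * y / c)) hc.le
  rw [hlog, mul_sub c (x * y / c), mul_div_cancel₀ _ hc.ne', mul_one] at this
  rw [negMulLog]
  linarith

theorem sum_sum_negMulLog_le_add_marginals {ι κ : Type*} [Fintype ι] [Fintype κ]
    {c : ι → κ → ℝ} (hc : ∀ i k, 0 ≤ c i k) (hc1 : ∑ i, ∑ k, c i k ≤ 1) :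
    ∑ i, ∑ k, negMulLog (c i k) ≤
      ∑ i, negMulLog (∑ k, c i k) + ∑ k, negMulLog (∑ i, c i k) := by
  set P := fun i => ∑ k, c i k
  set Q := fun k => ∑ i, c i k
  have hP : ∀ i k, c i k ≤ P i := fun i k =>
    Finset.single_le_sum (fun k _ => hc i k) (Finset.mem_univ k)
  have hQ : ∀ i k, c i k ≤ Q k := fun i k =>
    Finset.single_le_sum (fun i _ => hc i k) (Finset.mem_univ i)
  have hPQ : ∑ i, ∑ k, P i * Q k = (∑ i, P i) * ∑ i, P i := by
    rw [← Finset.sum_mul_sum, show ∑ k, Q k = ∑ i, P i from Finset.sum_comm]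
  have hlogP : ∑ i, ∑ k, c i k * log (P i) = -∑ i, negMulLog (P i) := by
    simp [← Finset.sum_mul, negMulLog, P]
  have hlogQ : ∑ i, ∑ k, c i k * log (Q k) = -∑ k, negMulLog (Q k) := by
    rw [Finset.sum_comm]
    simp [← Finset.sum_mul, negMulLog, Q]
  have hS : 0 ≤ ∑ i, P i := Finset.sum_nonneg fun i _ => Finset.sum_nonneg fun k _ => hc i k
  calc ∑ i, ∑ k, negMulLog (c i k)
      ≤ ∑ i, ∑ k, (P i * Q k - c i k - c i k * log (P i) - c i k * log (Q k)) :=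
        Finset.sum_le_sum fun i _ => Finset.sum_le_sum fun k _ =>
          negMulLog_le_mul_sub_sub_mul_log_sub_mul_log (hc i k) (hP i k) (hQ i k)
    _ = (∑ i, P i) * (∑ i, P i) - ∑ i, P i + ∑ i, negMulLog (P i) + ∑ k, negMulLog (Q k) := by
        simp only [Finset.sum_sub_distrib]
        rw [hPQ, hlogP, hlogQ]
        ring
    _ ≤ ∑ i, negMulLog (P i) + ∑ k, negMulLog (Q k) := by nlinarith

theorem sum_negMulLog_le_add_marginals_mulVec {N ι κ : Type*} [Fintype N] [Fintype ι]
    [Fintype κ] {b : Matrix (N × ι) κ ℝ} (hb : ∀ x k, 0 ≤ b x k) (hcol : ∀ k, ∑ x, b x k = 1)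
    (hrow : ∀ x, ∑ k, b x k ≤ 1) {lam : κ → ℝ} (hlam : ∀ k, 0 ≤ lam k)
    (hlam1 : ∑ k, lam k ≤ 1) :
    ∑ k, negMulLog (lam k) ≤
      ∑ n, negMulLog (∑ i, (b *ᵥ lam) (n, i)) + ∑ i, negMulLog (∑ n, (b *ᵥ lam) (n, i)) := by
  have hc : ∀ x, 0 ≤ (b *ᵥ lam) x := fun x =>
    Finset.sum_nonneg fun k _ => mul_nonneg (hb x k) (hlam k)
  have hc1 : ∑ n, ∑ i, (b *ᵥ lam) (n, i) ≤ 1 := by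
    rw [← Fintype.sum_prod_type]
    simp only [mulVec, dotProduct]
    rw [Finset.sum_comm]
    simpa [← Finset.sum_mul, hcol] using hlam1
  calc ∑ k, negMulLog (lam k) ≤ ∑ x, negMulLog ((b *ᵥ lam) x) :=
        sum_negMulLog_le_sum_negMulLog_mulVec hb hcol hrow hlam
    _ = ∑ n, ∑ i, negMulLog ((b *ᵥ lam) (n, i)) := Fintype.sum_prod_type _
    _ ≤ _ := sum_sum_negMulLog_le_add_marginals (fun n i => hc (n, i)) hc1

end ShannonEntropy

section KrausFamily

variable {𝕜 E N : Type*} [RCLike 𝕜] [NormedAddCommGroup E] [InnerProductSpace 𝕜 E]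
  [CompleteSpace E] [Fintype N] {T : N → E →L[𝕜] E}

open ContinuousLinearMap in
theorem sum_norm_sq_apply_eq_of_sum_star_mul_self_eq_one (hT : ∑ n, star (T n) * T n = 1)
    (x : E) : ∑ n, ‖T n x‖ ^ 2 = ‖x‖ ^ 2 := by
  have h : ∑ n, (adjoint (T n) ∘L T n) x = x := by
    simpa [star_eq_adjoint, mul_def] using congr($hT x)
  simp_rw [apply_norm_sq_eq_inner_adjoint_right, ← map_sum, ← inner_sum, h,
    ← inner_self_eq_norm_sq (𝕜 := 𝕜)]

theorem norm_le_one_of_sum_star_mul_self_eq_one (hT : ∑ n, star (T n) * T n = 1) (n : N) :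
    ‖T n‖ ≤ 1 := by
  refine ContinuousLinearMap.opNorm_le_bound _ zero_le_one fun x => ?_
  rw [one_mul, ← pow_le_pow_iff_left₀ (norm_nonneg _) (norm_nonneg _) two_ne_zero,
    ← sum_norm_sq_apply_eq_of_sum_star_mul_self_eq_one hT x]
  exact Finset.single_le_sum (f := fun m => ‖T m x‖ ^ 2) (fun _ _ => by positivity)
    (Finset.mem_univ n)

variable {ι κ : Type*} [Fintype ι] [Fintype κ]

noncomputable def krausTransition (T : N → E →L[𝕜] E) (u : OrthonormalBasis ι 𝕜 E)
    (v : OrthonormalBasis κ 𝕜 E) : Matrix (N × ι) κ ℝ :=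
  fun x k => ‖⟪u x.2, T x.1 (v k)⟫_𝕜‖ ^ 2

variable (u : OrthonormalBasis ι 𝕜 E) (v : OrthonormalBasis κ 𝕜 E)

theorem sum_krausTransition_apply (hT : ∑ n, star (T n) * T n = 1) (k : κ) :
    ∑ x, krausTransition T u v x k = 1 := by
  simp only [krausTransition, Fintype.sum_prod_type, u.sum_sq_norm_inner_right,
    sum_norm_sq_apply_eq_of_sum_star_mul_self_eq_one hT, v.orthonormal.1 k, one_pow]

open ContinuousLinearMap in
theorem sum_krausTransition_le_one (hT : ∑ n, star (T n) * T n = 1) (x : N × ι) :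
    ∑ k, krausTransition T u v x k ≤ 1 := by
  obtain ⟨n, i⟩ := x
  have hnorm : ‖adjoint (T n)‖ ≤ 1 := by
    rw [LinearIsometryEquiv.norm_map]
    exact norm_le_one_of_sum_star_mul_self_eq_one hT n
  calc ∑ k, krausTransition T u v (n, i) k = ‖adjoint (T n) (u i)‖ ^ 2 := by
        simp only [krausTransition, ← adjoint_inner_left]
        exact v.sum_sq_norm_inner_left _
    _ ≤ (‖adjoint (T n)‖ * ‖u i‖) ^ 2 := by gcongr; exact le_opNorm _ _
    _ ≤ 1 := by
        rw [u.orthonormal.1 i, mul_one]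
        exact pow_le_one₀ (norm_nonneg _) hnorm

end KrausFamily

namespace Matrix

variable {𝕜 d : Type*} [RCLike 𝕜] [Fintype d] [DecidableEq d]

theorem trace_eq_sum_inner_toEuclideanCLM {ι : Type*} [Fintype ι] (M : Matrix d d 𝕜)
    (b : OrthonormalBasis ι 𝕜 (EuclideanSpace 𝕜 d)) :
    M.trace = ∑ i, ⟪b i, toEuclideanCLM (n := d) (𝕜 := 𝕜) M (b i)⟫_𝕜 := by
  rw [← trace_toLin_eq M (EuclideanSpace.basisFun d 𝕜).toBasis,
    LinearMap.trace_eq_sum_inner _ b]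
  rfl

namespace IsHermitian

variable {ρ : Matrix d d 𝕜}

theorem toEuclideanCLM_eigenvectorBasis (hρ : ρ.IsHermitian) (k : d) :
    toEuclideanCLM (n := d) (𝕜 := 𝕜) ρ (hρ.eigenvectorBasis k) =
      (hρ.eigenvalues k : 𝕜) • hρ.eigenvectorBasis k := by
  apply WithLp.ofLp_injective 2
  rw [ofLp_toEuclideanCLM, hρ.mulVec_eigenvectorBasis k, WithLp.ofLp_smul,
    RCLike.real_smul_eq_coe_smul (K := 𝕜)]

theorem eigenvalues_eq_re_inner (hρ : ρ.IsHermitian) (i : d) :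
    hρ.eigenvalues i = RCLike.re ⟪hρ.eigenvectorBasis i,
      toEuclideanCLM (n := d) (𝕜 := 𝕜) ρ (hρ.eigenvectorBasis i)⟫_𝕜 := by
  rw [toEuclideanCLM_eigenvectorBasis, inner_smul_right, inner_self_eq_norm_sq_to_K,
    hρ.eigenvectorBasis.orthonormal.1 i]
  simp

theorem re_inner_toEuclideanCLM (hρ : ρ.IsHermitian) (w : EuclideanSpace 𝕜 d) :
    RCLike.re ⟪w, toEuclideanCLM (n := d) (𝕜 := 𝕜) ρ w⟫_𝕜 =
      ∑ k, hρ.eigenvalues k * ‖⟪hρ.eigenvectorBasis k, w⟫_𝕜‖ ^ 2 := by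
  set v := hρ.eigenvectorBasis
  have hsa : star (toEuclideanCLM (n := d) (𝕜 := 𝕜) ρ) = toEuclideanCLM (n := d) (𝕜 := 𝕜) ρ := by
    rw [← map_star, star_eq_conjTranspose, hρ.eq]
  have hv : ∀ k, ⟪v k, toEuclideanCLM (n := d) (𝕜 := 𝕜) ρ w⟫_𝕜 =
      hρ.eigenvalues k * ⟪v k, w⟫_𝕜 := by
    intro k
    rw [← hsa, ContinuousLinearMap.star_eq_adjoint, ContinuousLinearMap.adjoint_inner_right,
      toEuclideanCLM_eigenvectorBasis, inner_smul_left, RCLike.conj_ofReal]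
  rw [← v.sum_inner_mul_inner, map_sum]
  refine Finset.sum_congr rfl fun k _ => ?_
  rw [hv, mul_left_comm, ← inner_conj_symm, RCLike.conj_mul]
  norm_cast

theorem krausTransition_mulVec_eigenvalues {N ι : Type*} [Fintype N] [Fintype ι]
    (hρ : ρ.IsHermitian) (A : N → Matrix d d 𝕜) (u : OrthonormalBasis ι 𝕜 (EuclideanSpace 𝕜 d))
    (x : N × ι) :
    (krausTransition (fun n => toEuclideanCLM (n := d) (𝕜 := 𝕜) (A n)) u hρ.eigenvectorBasis *ᵥ
        hρ.eigenvalues) x = RCLike.re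
      ⟪u x.2, toEuclideanCLM (n := d) (𝕜 := 𝕜) (A x.1 * ρ * (A x.1)ᴴ) (u x.2)⟫_𝕜 := by
  rw [map_mul, map_mul, ← star_eq_conjTranspose, map_star, mul_apply_eq_comp, mul_apply_eq_comp,
    ContinuousLinearMap.star_eq_adjoint, ← ContinuousLinearMap.adjoint_inner_left,
    hρ.re_inner_toEuclideanCLM]
  refine Finset.sum_congr rfl fun k _ => ?_
  rw [mul_comm, ContinuousLinearMap.adjoint_inner_right, norm_inner_symm]
  rfl

end IsHermitian

end Matrix

theorem vNE_eq_sum_negMulLog_eigenvalues {d : Type*} [Fintype d] [DecidableEq d]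
    {ρ : Matrix d d ℂ} (hρ : ρ.IsHermitian) :
    vNE ρ = ∑ i, Real.negMulLog (hρ.eigenvalues i) := by
  rw [vNE, dif_pos hρ]

/-- Theorem 1 (quantum Szilard principle for pure instruments). -/
theorem szilard_bound_pure_instrument
    {d N : Type*} [Fintype d] [DecidableEq d] [Fintype N]
    (A : N → Matrix d d ℂ)
    (hA : ∑ n, (A n)ᴴ * A n = 1)
    (ρ : Matrix d d ℂ) (hρ : IsDensity ρ)
    (p : N → ℝ) (hp : ∀ n, p n = ((ρ * ((A n)ᴴ * A n)).trace).re)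
    (ρ₁ : Matrix d d ℂ) (hρ₁ : ρ₁ = ∑ n, A n * ρ * (A n)ᴴ) :
    vNE ρ - vNE ρ₁ ≤ ∑ n, Real.negMulLog (p n) := by
  obtain ⟨hρpsd, hρtr⟩ := hρ
  have hρH : ρ.IsHermitian := hρpsd.1
  have hρ₁H : ρ₁.IsHermitian := hρ₁ ▸ isSelfAdjoint_sum _ fun n _ =>
    (isHermitian_mul_mul_conjTranspose (A n) hρH).isSelfAdjoint
  let T n := toEuclideanCLM (n := d) (𝕜 := ℂ) (A n)
  have hT : ∑ n, star (T n) * T n = 1 := by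
    simp only [T, ← map_star, ← map_mul, ← map_sum, star_eq_conjTranspose, hA, map_one]
  set u := hρ₁H.eigenvectorBasis
  let c := krausTransition T u hρH.eigenvectorBasis *ᵥ hρH.eigenvalues
  have hpc : ∀ n, p n = ∑ i, c (n, i) := by
    intro n
    rw [hp, ← Matrix.mul_assoc, trace_mul_cycle, trace_eq_sum_inner_toEuclideanCLM _ u,
      Complex.re_sum]
    simp only [c, T, hρH.krausTransition_mulVec_eigenvalues, RCLike.re_to_complex]
  have hνc : ∀ i, hρ₁H.eigenvalues i = ∑ n, c (n, i) := by
    intro i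
    rw [hρ₁H.eigenvalues_eq_re_inner]
    simp only [c, T, hρH.krausTransition_mulVec_eigenvalues, u, hρ₁, map_sum, _root_.sum_apply,
      inner_sum]
  have hsum : ∑ k, hρH.eigenvalues k = 1 := by
    simpa [hρtr] using (congrArg RCLike.re hρH.trace_eq_sum_eigenvalues).symm
  have hshannon : ∑ k, Real.negMulLog (hρH.eigenvalues k) ≤
      ∑ n, Real.negMulLog (∑ i, c (n, i)) + ∑ i, Real.negMulLog (∑ n, c (n, i)) :=
    sum_negMulLog_le_add_marginals_mulVec (fun _ _ => sq_nonneg _)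
    (sum_krausTransition_apply u hρH.eigenvectorBasis hT)
    (sum_krausTransition_le_one u hρH.eigenvectorBasis hT)
    hρpsd.eigenvalues_nonneg hsum.le
  rw [vNE_eq_sum_negMulLog_eigenvalues hρH, vNE_eq_sum_negMulLog_eigenvalues hρ₁H]
  simp only [hpc, hνc]
  linarith
end

section
/- Under the setup of the previous statement, define ρ₁ := Σ_n U_n P_n ρ P_n U_n*, ρ₁' := Σ_n P_n ρ P_n, ρ₂ = ρ₂' := Σ_n p_n |n⟩⟨n|, and the mutual informations I := S(ρ₁)+S(ρ₂)−S(ρ₁₂), I' := S(ρ₁')+S(ρ₂')−S(ρ₁₂'). Then S(ρ) − S(ρ₁) ≤ I' − I. -/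
open Matrix Kronecker ComplexOrder

/-!
A channel `A ↦ ∑ₙ Mₙ A Mₙᴴ` with `∑ Mₙ Mₙᴴ = ∑ Mₙᴴ Mₙ = 1` never decreases von Neumann entropy:
written in eigenbases of `A` and of its image, it maps the eigenvalues of `A` to those of the image
by the doubly stochastic matrix `∑ₙ |Cₙ i j|²`, and `∑ η(λᵢ)` can only grow under such a matrix
by Jensen's inequality for the concave `η(x) = -x log x`. The pinching `ρ ↦ ∑ Pₙ ρ Pₙ` is such a
channel, so `S(ρ) ≤ S(ρ₁')`, while `ρ₁₂` is the conjugate of `ρ₁₂'` by the block-diagonal unitary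
`⊕ₙ Uₙ`, so `S(ρ₁₂) = S(ρ₁₂')`. As `ρ₂` is common to `I` and `I'`,
`I' - I = S(ρ₁') - S(ρ₁) ≥ S(ρ) - S(ρ₁)`.
-/

theorem Matrix.sum_negMulLog_le_sum_negMulLog_mulVec {n : Type*} [Fintype n] [DecidableEq n]
    {T : Matrix n n ℝ} (hT : T ∈ doublyStochastic ℝ n) {x : n → ℝ} (hx : ∀ j, 0 ≤ x j) :
    ∑ j, Real.negMulLog (x j) ≤ ∑ i, Real.negMulLog ((T *ᵥ x) i) :=
  calc ∑ j, Real.negMulLog (x j)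
      = ∑ i, ∑ j, T i j * Real.negMulLog (x j) := by
        rw [Finset.sum_comm]
        simp only [← Finset.sum_mul, sum_col_of_mem_doublyStochastic hT, one_mul]
    _ ≤ ∑ i, Real.negMulLog ((T *ᵥ x) i) := by
        gcongr with i
        simpa [mulVec, dotProduct] using Real.concaveOn_negMulLog.le_map_sum (t := Finset.univ)
          (fun j _ => nonneg_of_mem_doublyStochastic hT) (sum_row_of_mem_doublyStochastic hT i)
          (fun j _ => hx j)

section Channel

variable {d ι : Type*} [Fintype d] [DecidableEq d] [Fintype ι]

theorem Matrix.sum_conj_mul_conjTranspose (M : ι → Matrix d d ℂ) (X : Matrix d d ℂ)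
    {Y : Matrix d d ℂ} (hY : Y * Yᴴ = 1) :
    ∑ n, (X * M n * Y) * (X * M n * Y)ᴴ = X * (∑ n, M n * (M n)ᴴ) * Xᴴ := by
  rw [Finset.mul_sum, Finset.sum_mul]
  refine Finset.sum_congr rfl fun n _ => ?_
  calc X * M n * Y * (X * M n * Y)ᴴ = X * M n * (Y * Yᴴ) * (M n)ᴴ * Xᴴ := by
        simp only [conjTranspose_mul, Matrix.mul_assoc]
    _ = X * (M n * (M n)ᴴ) * Xᴴ := by simp only [hY, Matrix.mul_one, Matrix.mul_assoc]

def Matrix.krausWeights (C : ι → Matrix d d ℂ) : Matrix d d ℝ :=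
  of fun i j => ∑ n, Complex.normSq (C n i j)

theorem Matrix.mul_diagonal_mul_conjTranspose_apply_self (X : Matrix d d ℂ) (x : d → ℝ) (i : d) :
    (X * diagonal (fun j => (x j : ℂ)) * Xᴴ) i i
      = ((∑ j, Complex.normSq (X i j) * x j : ℝ) : ℂ) := by
  rw [mul_apply]
  simp only [mul_diagonal, conjTranspose_apply, Complex.ofReal_sum, Complex.ofReal_mul,
    Complex.star_def, Complex.normSq_eq_conj_mul_self]
  exact Finset.sum_congr rfl fun j _ => by ring

theorem Matrix.sum_mul_diagonal_mul_conjTranspose_apply_self (C : ι → Matrix d d ℂ)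
    (x : d → ℝ) (i : d) :
    (∑ n, C n * diagonal (fun j => (x j : ℂ)) * (C n)ᴴ) i i = ((krausWeights C *ᵥ x) i : ℂ) := by
  simp only [sum_apply, mul_diagonal_mul_conjTranspose_apply_self, krausWeights, mulVec,
    dotProduct, of_apply, Finset.sum_mul, ← Complex.ofReal_sum]
  rw [Finset.sum_comm]

theorem Matrix.krausWeights_mem_doublyStochastic {C : ι → Matrix d d ℂ}
    (hunital : ∑ n, C n * (C n)ᴴ = 1) (htp : ∑ n, (C n)ᴴ * C n = 1) :
    krausWeights C ∈ doublyStochastic ℝ d := by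
  have hsum_one {C : ι → Matrix d d ℂ} (h : ∑ n, C n * (C n)ᴴ = 1) (i : d) :
      (krausWeights C *ᵥ 1) i = 1 := by
    have := sum_mul_diagonal_mul_conjTranspose_apply_self C 1 i
    simp only [Pi.one_apply, Complex.ofReal_one, diagonal_one, Matrix.mul_one, h,
      one_apply_eq] at this
    exact_mod_cast this.symm
  refine mem_doublyStochastic.mpr ⟨fun i j => Finset.sum_nonneg fun n _ => Complex.normSq_nonneg _,
    funext (hsum_one hunital), ?_⟩
  have hT : krausWeights (fun n => (C n)ᴴ) = (krausWeights C)ᵀ := by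
    ext i j
    simp [krausWeights, Complex.normSq_conj]
  rw [← mulVec_transpose, ← hT]
  exact funext (hsum_one (by simpa only [conjTranspose_conjTranspose] using htp))

theorem vNE_le_vNE_sum_mul_mul_conjTranspose {A : Matrix d d ℂ} (hA : A.PosSemidef)
    {M : ι → Matrix d d ℂ} (hunital : ∑ n, M n * (M n)ᴴ = 1) (htp : ∑ n, (M n)ᴴ * M n = 1) :
    vNE A ≤ vNE (∑ n, M n * A * (M n)ᴴ) := by
  set B := ∑ n, M n * A * (M n)ᴴ
  have hB : B.IsHermitian := (Finset.sum_induction _ PosSemidef (fun _ _ => PosSemidef.add)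
    PosSemidef.zero fun n _ => hA.mul_mul_conjTranspose_same (M n)).isHermitian
  set W : Matrix d d ℂ := ↑hA.isHermitian.eigenvectorUnitary
  set V : Matrix d d ℂ := ↑hB.eigenvectorUnitary
  have hW : W * Wᴴ = 1 := Unitary.mul_star_self_of_mem hA.isHermitian.eigenvectorUnitary.2
  have hWW : Wᴴ * W = 1 := Unitary.star_mul_self_of_mem hA.isHermitian.eigenvectorUnitary.2
  have hV : V * Vᴴ = 1 := Unitary.mul_star_self_of_mem hB.eigenvectorUnitary.2
  have hVV : Vᴴ * V = 1 := Unitary.star_mul_self_of_mem hB.eigenvectorUnitary.2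
  -- the Kraus operators of the channel in the eigenbases of `A` and `B`
  set C : ι → Matrix d d ℂ := fun n => Vᴴ * M n * W
  have hdiag : diagonal (fun i => (hB.eigenvalues i : ℂ))
      = ∑ n, C n * diagonal (fun j => (hA.isHermitian.eigenvalues j : ℂ)) * (C n)ᴴ := by
    have hAW : A = W * diagonal (fun j => (hA.isHermitian.eigenvalues j : ℂ)) * Wᴴ :=
      hA.isHermitian.spectral_theorem
    calc diagonal (fun i => (hB.eigenvalues i : ℂ)) = Vᴴ * B * V := by
          simpa [V, star_eq_conjTranspose, Function.comp_def] using
            hB.conjStarAlgAut_star_eigenvectorUnitary.symm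
      _ = ∑ n, C n * diagonal (fun j => (hA.isHermitian.eigenvalues j : ℂ)) * (C n)ᴴ := by
          simp only [B, C]
          conv_lhs => rw [hAW]
          simp only [Finset.mul_sum, Finset.sum_mul, conjTranspose_mul,
            conjTranspose_conjTranspose, Matrix.mul_assoc]
  have hC : krausWeights C ∈ doublyStochastic ℝ d := by
    refine krausWeights_mem_doublyStochastic ?_ ?_
    · rw [sum_conj_mul_conjTranspose M Vᴴ hW, hunital, Matrix.mul_one,
        conjTranspose_conjTranspose, hVV]
    · calc ∑ n, (C n)ᴴ * C n = ∑ n, (Wᴴ * (M n)ᴴ * V) * (Wᴴ * (M n)ᴴ * V)ᴴ := by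
            simp only [C, conjTranspose_mul, conjTranspose_conjTranspose, Matrix.mul_assoc]
        _ = 1 := by
          rw [sum_conj_mul_conjTranspose _ Wᴴ hV]
          simp only [conjTranspose_conjTranspose, htp, Matrix.mul_one, hWW]
  have hμ : hB.eigenvalues = krausWeights C *ᵥ hA.isHermitian.eigenvalues := by
    funext i
    have := congrFun (congrFun hdiag i) i
    rw [diagonal_apply_eq, sum_mul_diagonal_mul_conjTranspose_apply_self] at this
    exact_mod_cast this
  simp only [vNE, dif_pos hA.isHermitian, dif_pos hB, hμ]
  exact sum_negMulLog_le_sum_negMulLog_mulVec hC hA.eigenvalues_nonneg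

theorem vNE_mul_mul_conjTranspose_of_mem_unitaryGroup (A : Matrix d d ℂ) {V : Matrix d d ℂ}
    (hV : V ∈ unitaryGroup d ℂ) : vNE (V * A * Vᴴ) = vNE A := by
  have hVV : Vᴴ * V = 1 := Unitary.star_mul_self_of_mem hV
  by_cases hA : A.IsHermitian
  · have hB : (V * A * Vᴴ).IsHermitian := isHermitian_mul_mul_conjTranspose V hA
    have hchar : (V * A * Vᴴ).charpoly = A.charpoly := by
      rw [charpoly_mul_comm, ← Matrix.mul_assoc, hVV, Matrix.one_mul]
    simp only [vNE, dif_pos hA, dif_pos hB, (hB.eigenvalues_eq_eigenvalues_iff hA).mpr hchar]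
  · have hA_eq : A = Vᴴ * (V * A * Vᴴ) * V := by
      simp only [← Matrix.mul_assoc, hVV, Matrix.one_mul]
      rw [Matrix.mul_assoc, hVV, Matrix.mul_one]
    have hB : ¬ (V * A * Vᴴ).IsHermitian := fun hB =>
      hA (hA_eq ▸ isHermitian_conjTranspose_mul_mul V hB)
    simp only [vNE, dif_neg hA, dif_neg hB]

end Channel

theorem Matrix.sum_kronecker_single_eq_blockDiagonal {d N α : Type*} [Fintype N] [DecidableEq N]
    [Semiring α] (A : N → Matrix d d α) :
    ∑ n, A n ⊗ₖ single n n (1 : α) = blockDiagonal A := by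
  ext ⟨i, k⟩ ⟨j, k'⟩
  simp [blockDiagonal_apply, kroneckerMap_apply, Matrix.sum_apply, single_apply, ite_and]

theorem Matrix.blockDiagonal_mem_unitaryGroup {d N : Type*} [Fintype d] [DecidableEq d]
    [Fintype N] [DecidableEq N] {U : N → Matrix d d ℂ} (hU : ∀ n, U n ∈ unitaryGroup d ℂ) :
    blockDiagonal U ∈ unitaryGroup (d × N) ℂ := by
  rw [mem_unitaryGroup_iff, star_eq_conjTranspose, blockDiagonal_conjTranspose,
    ← blockDiagonal_mul]
  simp_rw [← star_eq_conjTranspose, mem_unitaryGroup_iff.mp (hU _)]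
  exact blockDiagonal_one

theorem entropy_decrease_bounded_by_OLR_information_loss_general
    {d N : Type*} [Fintype d] [DecidableEq d] [Fintype N] [DecidableEq N]
    (P : N → Matrix d d ℂ)
    (hPherm : ∀ n, (P n).IsHermitian)
    (hPproj : ∀ n, P n * P n = P n)
    (hPsum : ∑ n, P n = 1)
    (U : N → Matrix d d ℂ) (hU : ∀ n, U n * (U n)ᴴ = 1 ∧ (U n)ᴴ * U n = 1)
    (ρ : Matrix d d ℂ) (hρ : IsDensity ρ)
    (ρ₁₂ ρ₁₂' : Matrix (d × N) (d × N) ℂ)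
    (hρ₁₂ : ρ₁₂ = ∑ n, (U n * P n * ρ * P n * (U n)ᴴ) ⊗ₖ Matrix.single n n 1)
    (hρ₁₂' : ρ₁₂' = ∑ n, (P n * ρ * P n) ⊗ₖ Matrix.single n n 1)
    (ρ₁ ρ₁' : Matrix d d ℂ) (ρ₂ : Matrix N N ℂ)
    (hρ₁' : ρ₁' = ∑ n, P n * ρ * P n)
    (I I' : ℝ)
    (hI : I = vNE ρ₁ + vNE ρ₂ - vNE ρ₁₂)
    (hI' : I' = vNE ρ₁' + vNE ρ₂ - vNE ρ₁₂') :
    vNE ρ - vNE ρ₁ ≤ I' - I := by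
  have hpinching : vNE ρ ≤ vNE ρ₁' := by
    simpa only [(hPherm _).eq, ← hρ₁'] using vNE_le_vNE_sum_mul_mul_conjTranspose hρ.1 (M := P)
      (by simp only [(hPherm _).eq, hPproj, hPsum]) (by simp only [(hPherm _).eq, hPproj, hPsum])
  have hjoint : vNE ρ₁₂ = vNE ρ₁₂' := by
    have hconj : ρ₁₂ = blockDiagonal U * ρ₁₂' * (blockDiagonal U)ᴴ := by
      rw [hρ₁₂, hρ₁₂', sum_kronecker_single_eq_blockDiagonal,
        sum_kronecker_single_eq_blockDiagonal, blockDiagonal_conjTranspose, ← blockDiagonal_mul,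
        ← blockDiagonal_mul]
      simp only [Matrix.mul_assoc]
    rw [hconj, vNE_mul_mul_conjTranspose_of_mem_unitaryGroup _
      (blockDiagonal_mem_unitaryGroup fun n => mem_unitaryGroup_iff.mpr (hU n).1)]
  rw [hI, hI']
  linarith

/-- Proposition 2 (connection with the OLR approach). -/
theorem entropy_decrease_bounded_by_OLR_information_loss
    {d N : Type*} [Fintype d] [DecidableEq d] [Fintype N] [DecidableEq N]
    (P : N → Matrix d d ℂ)
    (hPherm : ∀ n, (P n).IsHermitian)
    (hPproj : ∀ n, P n * P n = P n)
    (hPorth : ∀ n m, n ≠ m → P n * P m = 0)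
    (hPsum : ∑ n, P n = 1)
    (U : N → Matrix d d ℂ) (hU : ∀ n, U n * (U n)ᴴ = 1 ∧ (U n)ᴴ * U n = 1)
    (ρ : Matrix d d ℂ) (hρ : IsDensity ρ)
    (p : N → ℝ) (hp : ∀ n, p n = ((ρ * P n).trace).re)
    (ρ₁₂ ρ₁₂' : Matrix (d × N) (d × N) ℂ)
    (hρ₁₂ : ρ₁₂ = ∑ n, (U n * P n * ρ * P n * (U n)ᴴ) ⊗ₖ Matrix.single n n 1)
    (hρ₁₂' : ρ₁₂' = ∑ n, (P n * ρ * P n) ⊗ₖ Matrix.single n n 1)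
    (ρ₁ ρ₁' : Matrix d d ℂ) (ρ₂ : Matrix N N ℂ)
    (hρ₁ : ρ₁ = ∑ n, U n * P n * ρ * P n * (U n)ᴴ)
    (hρ₁' : ρ₁' = ∑ n, P n * ρ * P n)
    (hρ₂ : ρ₂ = Matrix.diagonal (fun n => ((p n : ℝ) : ℂ)))
    (I I' : ℝ)
    (hI : I = vNE ρ₁ + vNE ρ₂ - vNE ρ₁₂)
    (hI' : I' = vNE ρ₁' + vNE ρ₂ - vNE ρ₁₂') :
    vNE ρ - vNE ρ₁ ≤ I' - I :=
  entropy_decrease_bounded_by_OLR_information_loss_general P hPherm hPproj hPsum U hU ρ hρ ρ₁₂ ρ₁₂'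
    hρ₁₂ hρ₁₂' ρ₁ ρ₁' ρ₂ hρ₁' I I' hI hI'
end

section
/- Suppose an instrument is a finite convex combination 𝔍(n) = Σ_i λ_i 𝔍^(i)(n) of pure instruments 𝔍^(i)(n)(ρ) = A^(i)_n ρ (A^(i)_n)* (each with Σ_n (A^(i)_n)* A^(i)_n = 1), with λ_i > 0, Σ_i λ_i = 1. Then for every density operator ρ, with ρ₁ := Σ_n 𝔍(n)(ρ) and p_n := Tr(𝔍(n)(ρ)), one has S(ρ) − S(ρ₁) ≤ H(p). -/
open Matrix ComplexOrder

/-!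
Write `η t = -t log t`. Expanding a positive matrix `X` in a Parseval frame `(w α)` can only raise
its entropy: with `e j` the eigenvectors of `X`, the numbers `‖⟪e j, w α⟫‖²` have unit column sums
and row sums `‖w α‖² ≤ 1`, so Jensen gives `S(X) ≤ ∑ α, η ⟪w α, X w α⟫`.

For a pure instrument with pieces `B n = A n ρ (A n)*`, the vectors `(A n)* e`, for `e` running
over eigenvectors of `B n`, form a Parseval frame because `∑ (A n)* A n = 1`; hence
`S(ρ) ≤ ∑ n, S(B n)`. Using instead the eigenbasis of `∑ c j B j`, followed by Gibbs' inequality,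
gives `∑ c j S(B j) ≤ ∑ c j η(Tr B j) + S(∑ c j B j)`. With `c = 1` this turns the previous
inequality into the pure-instrument bound `S(ρ) - S(∑ B n) ≤ H(p)`; with `c = λ` and density
matrices `B j` it is the concavity of `S`. Averaging the pure-instrument bounds with the weights `λ i` and using the
concavity of `S` and of the Shannon entropy `H` gives the theorem.
-/

open scoped InnerProductSpace

namespace Real

theorem negMulLog_le_neg_mul_log_add_sub {x a : ℝ} (hx : 0 ≤ x) (ha : 0 < a) :
    negMulLog x ≤ -x * log a + a - x :=
  calc negMulLog x = x / a * negMulLog a + a * negMulLog (x / a) := by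
        rw [← negMulLog_mul, mul_div_cancel₀ _ ha.ne']
    _ ≤ x / a * negMulLog a + a * (1 - x / a) := by
        gcongr
        exact negMulLog_le_one_sub_self (by positivity)
    _ = -x * log a + a - x := by
        rw [negMulLog]
        field_simp
        ring

theorem sum_mul_negMulLog_le_negMulLog_sum {ι : Type*} [Fintype ι] {c x : ι → ℝ}
    (hc : ∀ i, 0 ≤ c i) (hc1 : ∑ i, c i ≤ 1) (hx : ∀ i, 0 ≤ x i) :
    ∑ i, c i * negMulLog (x i) ≤ negMulLog (∑ i, c i * x i) := by
  -- the missing weight `1 - ∑ c` sits at the point `0`, where `negMulLog` vanishes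
  have := concaveOn_negMulLog.le_map_sum (t := Finset.univ)
    (w := fun o : Option ι => o.elim (1 - ∑ i, c i) c) (p := fun o => o.elim 0 x)
    (fun o _ => by cases o <;> simp [hc, hc1]) (by simp [Fintype.sum_option])
    (fun o _ => by cases o <;> simp [hx])
  simpa [Fintype.sum_option] using this

theorem sum_negMulLog_le_sum_negMulLog_sum_mul {ι κ : Type*} [Fintype ι] [Fintype κ]
    {c : ι → κ → ℝ} {x : κ → ℝ} (hc : ∀ i k, 0 ≤ c i k) (hcol : ∀ k, ∑ i, c i k = 1)
    (hrow : ∀ i, ∑ k, c i k ≤ 1) (hx : ∀ k, 0 ≤ x k) :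
    ∑ k, negMulLog (x k) ≤ ∑ i, negMulLog (∑ k, c i k * x k) :=
  calc ∑ k, negMulLog (x k) = ∑ i, ∑ k, c i k * negMulLog (x k) := by
        simp only [Finset.sum_comm (γ := ι), ← Finset.sum_mul, hcol, one_mul]
    _ ≤ _ := Finset.sum_le_sum fun i _ =>
        sum_mul_negMulLog_le_negMulLog_sum (hc i) (hrow i) hx

theorem sum_negMulLog_le_negMulLog_sum_sub_sum_mul_log {ι : Type*} [Fintype ι] {q r : ι → ℝ}
    (hq : ∀ i, 0 ≤ q i) (hr : ∀ i, 0 ≤ r i) (hr1 : ∑ i, r i = 1)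
    (hsupp : ∀ i, r i = 0 → q i = 0) :
    ∑ i, negMulLog (q i) ≤ negMulLog (∑ i, q i) - ∑ i, q i * log (r i) := by
  set s := ∑ i, q i
  have hpt : ∀ i, negMulLog (q i) ≤ -q i * log s - q i * log (r i) + s * r i - q i := by
    intro i
    rcases (hq i).eq_or_lt with h | h
    · simpa [← h] using mul_nonneg (Finset.sum_nonneg fun j _ => hq j) (hr i)
    have hs : 0 < s := h.trans_le (Finset.single_le_sum (fun j _ => hq j) (Finset.mem_univ i))
    have hri : 0 < r i := (hr i).lt_of_ne fun h0 => h.ne' (hsupp i h0.symm)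
    have := negMulLog_le_neg_mul_log_add_sub (hq i) (mul_pos hs hri)
    rw [log_mul hs.ne' hri.ne'] at this
    linarith
  calc ∑ i, negMulLog (q i) ≤ ∑ i, (-q i * log s - q i * log (r i) + s * r i - q i) :=
        Finset.sum_le_sum fun i _ => hpt i
    _ = negMulLog s - ∑ i, q i * log (r i) := by
        simp only [Finset.sum_sub_distrib, Finset.sum_add_distrib, ← Finset.sum_mul,
          ← Finset.mul_sum, Finset.sum_neg_distrib, hr1, negMulLog]
        ring

theorem sum_mul_sum_negMulLog_le {I N : Type*} [Fintype I] [Fintype N] {c : I → ℝ}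
    {p : I → N → ℝ} (hc : ∀ i, 0 ≤ c i) (hc1 : ∑ i, c i ≤ 1) (hp : ∀ i n, 0 ≤ p i n) :
    ∑ i, c i * ∑ n, negMulLog (p i n) ≤ ∑ n, negMulLog (∑ i, c i * p i n) := by
  simp only [Finset.mul_sum]
  rw [Finset.sum_comm]
  exact Finset.sum_le_sum fun n _ =>
    sum_mul_negMulLog_le_negMulLog_sum hc hc1 fun i => hp i n

end Real

def IsParsevalFrame (𝕜 : Type*) {E F : Type*} [RCLike 𝕜] [NormedAddCommGroup E]
    [InnerProductSpace 𝕜 E] [Fintype F] (w : F → E) : Prop :=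
  ∀ x, ∑ α, ‖⟪w α, x⟫_𝕜‖ ^ 2 = ‖x‖ ^ 2

section ParsevalFrame

variable {𝕜 E : Type*} [RCLike 𝕜] [NormedAddCommGroup E] [InnerProductSpace 𝕜 E]

theorem OrthonormalBasis.isParsevalFrame {κ : Type*} [Fintype κ] (b : OrthonormalBasis κ 𝕜 E) :
    IsParsevalFrame 𝕜 b :=
  b.sum_sq_norm_inner_right

theorem IsParsevalFrame.norm_le_one {F : Type*} [Fintype F] {w : F → E}
    (hw : IsParsevalFrame 𝕜 w) (α : F) : ‖w α‖ ≤ 1 := by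
  have h : ‖⟪w α, w α⟫_𝕜‖ ^ 2 ≤ ‖w α‖ ^ 2 :=
    hw (w α) ▸ Finset.single_le_sum (f := fun β => ‖⟪w β, w α⟫_𝕜‖ ^ 2) (fun _ _ => by positivity)
      (Finset.mem_univ α)
  rw [inner_self_eq_norm_sq_to_K, norm_pow, RCLike.norm_ofReal, abs_norm] at h
  have ht : ‖w α‖ ^ 2 ≤ 1 := by nlinarith [sq_nonneg ‖w α‖]
  exact (sq_le_one_iff₀ (norm_nonneg _)).mp ht

end ParsevalFrame

namespace Matrix

variable {𝕜 d : Type*} [RCLike 𝕜] [Fintype d]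

theorem star_dotProduct_eq_inner (x y : EuclideanSpace 𝕜 d) : star ⇑x ⬝ᵥ ⇑y = ⟪x, y⟫_𝕜 :=
  dotProduct_comm _ _

theorem star_dotProduct_mulVec_conjTranspose_mulVec (A X : Matrix d d 𝕜) (v : d → 𝕜) :
    star (Aᴴ *ᵥ v) ⬝ᵥ X *ᵥ (Aᴴ *ᵥ v) = star v ⬝ᵥ (A * X * Aᴴ) *ᵥ v := by
  rw [star_mulVec, conjTranspose_conjTranspose, ← dotProduct_mulVec, mulVec_mulVec, mulVec_mulVec,
    Matrix.mul_assoc]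

variable [DecidableEq d]

theorem sum_dotProduct_mulVec_eq_trace {κ : Type*} [Fintype κ] (B : Matrix d d 𝕜)
    (v : OrthonormalBasis κ 𝕜 (EuclideanSpace 𝕜 d)) :
    ∑ k, star ⇑(v k) ⬝ᵥ B *ᵥ ⇑(v k) = B.trace := by
  have htr : LinearMap.trace 𝕜 _ (toEuclideanLin B) = B.trace := by
    rw [toEuclideanLin_eq_toLin_orthonormal, Matrix.trace_toLin_eq]
  rw [← htr, LinearMap.trace_eq_sum_inner _ v]
  simp only [← star_dotProduct_eq_inner, ofLp_toLpLin, toLin'_apply]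

theorem IsHermitian.re_dotProduct_mulVec_eq_sum {X : Matrix d d 𝕜} (hX : X.IsHermitian)
    (x : EuclideanSpace 𝕜 d) :
    RCLike.re (star ⇑x ⬝ᵥ X *ᵥ ⇑x) =
      ∑ j, hX.eigenvalues j * ‖⟪hX.eigenvectorBasis j, x⟫_𝕜‖ ^ 2 := by
  have hXx : X *ᵥ ⇑x =
      ∑ j, (⟪hX.eigenvectorBasis j, x⟫_𝕜 * hX.eigenvalues j) • ⇑(hX.eigenvectorBasis j) := by
    conv_lhs => rw [← hX.eigenvectorBasis.sum_repr' x]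
    rw [WithLp.ofLp_sum, mulVec_sum]
    refine Finset.sum_congr rfl fun j _ => ?_
    rw [WithLp.ofLp_smul, mulVec_smul, hX.mulVec_eigenvectorBasis,
      RCLike.real_smul_eq_coe_smul (K := 𝕜), smul_smul]
  rw [hXx, dotProduct_sum, map_sum]
  refine Finset.sum_congr rfl fun j _ => ?_
  rw [dotProduct_smul, star_dotProduct_eq_inner, smul_eq_mul, ← inner_conj_symm x, mul_right_comm,
    RCLike.mul_conj]
  simp [mul_comm]

theorem isParsevalFrame_conjTranspose_mulVec {N κ : Type*} [Fintype N] [Fintype κ]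
    {A : N → Matrix d d 𝕜} (hA : ∑ n, (A n)ᴴ * A n = 1)
    (b : N → OrthonormalBasis κ 𝕜 (EuclideanSpace 𝕜 d)) :
    IsParsevalFrame 𝕜 fun nk : N × κ => WithLp.toLp 2 ((A nk.1)ᴴ *ᵥ ⇑(b nk.1 nk.2)) := by
  intro x
  have hadj : ∀ n k, ⟪WithLp.toLp 2 ((A n)ᴴ *ᵥ ⇑(b n k)), x⟫_𝕜 =
      ⟪b n k, WithLp.toLp 2 (A n *ᵥ ⇑x)⟫_𝕜 := by
    intro n k
    rw [← star_dotProduct_eq_inner, ← star_dotProduct_eq_inner]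
    simp only [star_mulVec, conjTranspose_conjTranspose, dotProduct_mulVec]
  have hnorm : ∀ n, ‖WithLp.toLp 2 (A n *ᵥ ⇑x)‖ ^ 2 =
      RCLike.re (star ⇑x ⬝ᵥ ((A n)ᴴ * A n) *ᵥ ⇑x) := by
    intro n
    rw [← mulVec_mulVec, dotProduct_mulVec, ← star_mulVec, star_dotProduct_eq_inner,
      inner_self_eq_norm_sq]
  simp only [Fintype.sum_prod_type, hadj, OrthonormalBasis.sum_sq_norm_inner_right, hnorm,
    ← map_sum, ← dotProduct_sum, ← sum_mulVec, hA, one_mulVec, star_dotProduct_eq_inner,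
    inner_self_eq_norm_sq]

theorem trace_sum_mul_mul_conjTranspose {R d N : Type*} [CommSemiring R] [StarRing R]
    [Fintype d] [DecidableEq d] [Fintype N] {A : N → Matrix d d R}
    (hA : ∑ n, (A n)ᴴ * A n = 1) (ρ : Matrix d d R) :
    (∑ n, A n * ρ * (A n)ᴴ).trace = ρ.trace := by
  rw [trace_sum]
  simp only [trace_mul_cycle (A _) ρ]
  rw [← trace_sum, ← Finset.sum_mul, hA, Matrix.one_mul]

end Matrix

section VonNeumannEntropy

variable {d : Type*} [Fintype d] [DecidableEq d]

theorem vNE_of_isHermitian {X : Matrix d d ℂ} (hX : X.IsHermitian) :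
    vNE X = ∑ j, Real.negMulLog (hX.eigenvalues j) := by
  rw [vNE, dif_pos hX]

theorem vNE_le_sum_negMulLog_of_isParsevalFrame {F : Type*} [Fintype F] {X : Matrix d d ℂ}
    (hX : X.PosSemidef) {w : F → EuclideanSpace ℂ d} (hw : IsParsevalFrame ℂ w) :
    vNE X ≤ ∑ α, Real.negMulLog (star ⇑(w α) ⬝ᵥ X *ᵥ ⇑(w α)).re := by
  set e := hX.1.eigenvectorBasis
  have hqf : ∀ α, (star ⇑(w α) ⬝ᵥ X *ᵥ ⇑(w α)).re =
      ∑ j, ‖⟪e j, w α⟫_ℂ‖ ^ 2 * hX.1.eigenvalues j := fun α => by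
    rw [← RCLike.re_to_complex, hX.1.re_dotProduct_mulVec_eq_sum]
    exact Finset.sum_congr rfl fun j _ => mul_comm _ _
  simp only [vNE_of_isHermitian hX.1, hqf]
  refine Real.sum_negMulLog_le_sum_negMulLog_sum_mul (fun _ _ => by positivity) (fun j => ?_)
    (fun α => ?_) hX.eigenvalues_nonneg
  · simp only [norm_inner_symm (e _), hw (e j), e.orthonormal.1 j, one_pow]
  · rw [e.sum_sq_norm_inner_right]
    exact pow_le_one₀ (norm_nonneg _) (hw.norm_le_one α)

-- For `v`, `r` an eigendecomposition of a density matrix `τ`, the last sum is `-Tr (B log τ)`.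
theorem vNE_le_negMulLog_re_trace_sub_sum_mul_log {κ : Type*} [Fintype κ] {B : Matrix d d ℂ}
    (hB : B.PosSemidef) (v : OrthonormalBasis κ ℂ (EuclideanSpace ℂ d)) {r : κ → ℝ}
    (hr : ∀ k, 0 ≤ r k) (hr1 : ∑ k, r k = 1)
    (hsupp : ∀ k, r k = 0 → (star ⇑(v k) ⬝ᵥ B *ᵥ ⇑(v k)).re = 0) :
    vNE B ≤ Real.negMulLog B.trace.re -
      ∑ k, (star ⇑(v k) ⬝ᵥ B *ᵥ ⇑(v k)).re * Real.log (r k) := by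
  have htr : ∑ k, (star ⇑(v k) ⬝ᵥ B *ᵥ ⇑(v k)).re = B.trace.re := by
    rw [← Complex.re_sum, sum_dotProduct_mulVec_eq_trace]
  calc vNE B ≤ ∑ k, Real.negMulLog (star ⇑(v k) ⬝ᵥ B *ᵥ ⇑(v k)).re :=
        vNE_le_sum_negMulLog_of_isParsevalFrame hB v.isParsevalFrame
    _ ≤ _ := htr ▸ Real.sum_negMulLog_le_negMulLog_sum_sub_sum_mul_log
        (fun k => hB.re_dotProduct_nonneg _) hr hr1 hsupp

theorem sum_mul_vNE_le_sum_mul_negMulLog_add {J κ : Type*} [Fintype J] [Fintype κ]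
    {B : J → Matrix d d ℂ} (hB : ∀ j, (B j).PosSemidef) {c : J → ℝ} (hc : ∀ j, 0 ≤ c j)
    (v : OrthonormalBasis κ ℂ (EuclideanSpace ℂ d)) {r : κ → ℝ}
    (hr1 : ∑ k, r k = 1) (hBr : ∀ k, ∑ j, c j * (star ⇑(v k) ⬝ᵥ B j *ᵥ ⇑(v k)).re = r k) :
    ∑ j, c j * vNE (B j) ≤
      ∑ j, c j * Real.negMulLog (B j).trace.re + ∑ k, Real.negMulLog (r k) := by
  have hterm : ∀ j k, 0 ≤ c j * (star ⇑(v k) ⬝ᵥ B j *ᵥ ⇑(v k)).re := fun j k =>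
    mul_nonneg (hc j) ((hB j).re_dotProduct_nonneg (v k))
  have hr : ∀ k, 0 ≤ r k := fun k => hBr k ▸ Finset.sum_nonneg fun j _ => hterm j k
  have hklein : ∀ j, c j * vNE (B j) ≤ c j * (Real.negMulLog (B j).trace.re -
      ∑ k, (star ⇑(v k) ⬝ᵥ B j *ᵥ ⇑(v k)).re * Real.log (r k)) := by
    intro j
    rcases (hc j).eq_or_lt with h0 | hpos
    · simp [← h0]
    refine mul_le_mul_of_nonneg_left (vNE_le_negMulLog_re_trace_sub_sum_mul_log (hB j) v hr hr1
      fun k hk => ?_) (hc j)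
    have hjk := (Finset.sum_eq_zero_iff_of_nonneg fun i _ => hterm i k).mp ((hBr k).trans hk) j
      (Finset.mem_univ j)
    exact (mul_eq_zero.mp hjk).resolve_left hpos.ne'
  calc ∑ j, c j * vNE (B j)
      ≤ ∑ j, c j * (Real.negMulLog (B j).trace.re -
          ∑ k, (star ⇑(v k) ⬝ᵥ B j *ᵥ ⇑(v k)).re * Real.log (r k)) :=
        Finset.sum_le_sum fun j _ => hklein j
    _ = ∑ j, c j * Real.negMulLog (B j).trace.re - ∑ k, r k * Real.log (r k) := by
        simp only [mul_sub, Finset.sum_sub_distrib, Finset.mul_sum, ← hBr, Finset.sum_mul,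
          mul_assoc]
        rw [Finset.sum_comm (s := Finset.univ (α := J))]
    _ = _ := by
        simp only [Real.negMulLog, neg_mul, Finset.sum_neg_distrib, sub_eq_add_neg]

theorem sum_mul_vNE_le {J : Type*} [Fintype J] {B : J → Matrix d d ℂ}
    (hB : ∀ j, (B j).PosSemidef) {c : J → ℝ} (hc : ∀ j, 0 ≤ c j)
    (htr : (∑ j, c j • B j).trace = 1) :
    ∑ j, c j * vNE (B j) ≤
      ∑ j, c j * Real.negMulLog (B j).trace.re + vNE (∑ j, c j • B j) := by
  have hτ : (∑ j, c j • B j).PosSemidef := posSemidef_sum _ fun j _ => (hB j).smul (hc j)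
  rw [vNE_of_isHermitian hτ.1]
  refine sum_mul_vNE_le_sum_mul_negMulLog_add hB hc hτ.1.eigenvectorBasis ?_ fun k => ?_
  · have h := congrArg RCLike.re hτ.1.trace_eq_sum_eigenvalues
    rw [htr, map_sum] at h
    simpa using h.symm
  · simp only [hτ.1.eigenvalues_eq k, RCLike.re_to_complex, sum_mulVec, dotProduct_sum,
      Complex.re_sum, smul_mulVec, dotProduct_smul, Complex.real_smul, Complex.re_ofReal_mul]

theorem sum_mul_vNE_le_vNE_sum {I : Type*} [Fintype I] {σ : I → Matrix d d ℂ}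
    (hσ : ∀ i, IsDensity (σ i)) {c : I → ℝ} (hc : ∀ i, 0 ≤ c i) (hc1 : ∑ i, c i = 1) :
    ∑ i, c i * vNE (σ i) ≤ vNE (∑ i, c i • σ i) := by
  have htr : (∑ i, c i • σ i).trace = 1 := by
    simp only [trace_sum, trace_smul, (hσ _).2, Complex.real_smul, mul_one]
    exact_mod_cast hc1
  simpa [(hσ _).2] using sum_mul_vNE_le (fun i => (hσ i).1) hc htr

theorem vNE_le_sum_vNE_mul_mul_conjTranspose {N : Type*} [Fintype N] {A : N → Matrix d d ℂ}
    (hA : ∑ n, (A n)ᴴ * A n = 1) {ρ : Matrix d d ℂ} (hρ : ρ.PosSemidef) :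
    vNE ρ ≤ ∑ n, vNE (A n * ρ * (A n)ᴴ) := by
  have hB : ∀ n, (A n * ρ * (A n)ᴴ).PosSemidef := fun n => hρ.mul_mul_conjTranspose_same (A n)
  calc vNE ρ ≤ _ := vNE_le_sum_negMulLog_of_isParsevalFrame hρ
        (isParsevalFrame_conjTranspose_mulVec hA fun n => (hB n).1.eigenvectorBasis)
    _ = ∑ n, vNE (A n * ρ * (A n)ᴴ) := by
        simp only [Fintype.sum_prod_type, star_dotProduct_mulVec_conjTranspose_mulVec,
          ← RCLike.re_to_complex, ← IsHermitian.eigenvalues_eq, vNE_of_isHermitian (hB _).1]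

theorem vNE_sub_vNE_sum_mul_mul_conjTranspose_le {N : Type*} [Fintype N]
    {A : N → Matrix d d ℂ} (hA : ∑ n, (A n)ᴴ * A n = 1) {ρ : Matrix d d ℂ} (hρ : IsDensity ρ) :
    vNE ρ - vNE (∑ n, A n * ρ * (A n)ᴴ) ≤
      ∑ n, Real.negMulLog (A n * ρ * (A n)ᴴ).trace.re := by
  have hB : ∀ n, (A n * ρ * (A n)ᴴ).PosSemidef := fun n => hρ.1.mul_mul_conjTranspose_same (A n)
  have hens := sum_mul_vNE_le hB (c := fun _ => 1) (fun _ => zero_le_one)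
    (by simpa [trace_sum_mul_mul_conjTranspose hA] using hρ.2)
  simp only [one_mul, one_smul] at hens
  linarith [vNE_le_sum_vNE_mul_mul_conjTranspose hA hρ.1]

end VonNeumannEntropy

/-- Corollary 1: the Szilard bound for convex combinations of pure instruments. -/
theorem szilard_bound_convex_combination_of_pure_instruments
    {d N I : Type*} [Fintype d] [DecidableEq d] [Fintype N] [Fintype I]
    (A : I → N → Matrix d d ℂ)
    (hA : ∀ i, ∑ n, (A i n)ᴴ * A i n = 1)
    (lam : I → ℝ) (hlam : ∀ i, 0 < lam i) (hlamsum : ∑ i, lam i = 1)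
    (𝔍 : N → Matrix d d ℂ → Matrix d d ℂ)
    (h𝔍 : ∀ n σ, 𝔍 n σ = ∑ i, ((lam i : ℝ) : ℂ) • (A i n * σ * (A i n)ᴴ))
    (ρ : Matrix d d ℂ) (hρ : IsDensity ρ)
    (ρ₁ : Matrix d d ℂ) (hρ₁ : ρ₁ = ∑ n, 𝔍 n ρ)
    (p : N → ℝ) (hp : ∀ n, p n = ((𝔍 n ρ).trace).re) :
    vNE ρ - vNE ρ₁ ≤ ∑ n, Real.negMulLog (p n) := by
  set σ : I → Matrix d d ℂ := fun i => ∑ n, A i n * ρ * (A i n)ᴴ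
  set q : I → N → ℝ := fun i n => (A i n * ρ * (A i n)ᴴ).trace.re
  have hσ : ∀ i, IsDensity (σ i) := fun i =>
    ⟨posSemidef_sum _ fun n _ => hρ.1.mul_mul_conjTranspose_same _,
      (trace_sum_mul_mul_conjTranspose (hA i) ρ).trans hρ.2⟩
  have hρ₁σ : ρ₁ = ∑ i, lam i • σ i := by
    simp only [hρ₁, h𝔍, σ, Complex.coe_smul, Finset.smul_sum]
    exact Finset.sum_comm
  have hpq : ∀ n, p n = ∑ i, lam i * q i n := by
    simp [hp, h𝔍, q, trace_sum, trace_smul]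
  calc vNE ρ - vNE ρ₁
      = ∑ i, lam i * (vNE ρ - vNE (σ i)) + (∑ i, lam i * vNE (σ i) - vNE ρ₁) := by
        simp only [mul_sub, Finset.sum_sub_distrib, ← Finset.sum_mul, hlamsum]
        ring
    _ ≤ ∑ i, lam i * ∑ n, Real.negMulLog (q i n) + 0 := by
        gcongr with i
        · exact (hlam i).le
        · exact vNE_sub_vNE_sum_mul_mul_conjTranspose_le (hA i) hρ
        · rw [hρ₁σ, sub_nonpos]
          exact sum_mul_vNE_le_vNE_sum hσ (fun i => (hlam i).le) hlamsum
    _ ≤ ∑ n, Real.negMulLog (p n) := by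
        simp only [hpq, add_zero]
        exact Real.sum_mul_sum_negMulLog_le (fun i => (hlam i).le) hlamsum.le fun i n =>
          (Complex.nonneg_iff.mp (hρ.1.mul_mul_conjTranspose_same _).trace_nonneg).1
end

section
/- Let H = ℂ²⊗ℂ² ≅ ℂ⁴ with orthonormal basis ψ₁,…,ψ₄, and consider the swap unitary V on H⊗H, V(Φ⊗Ψ) = Ψ⊗Φ, the ancilla initial state φ = ψ₄, and the two-outcome ancilla observable Q̃ = (|ψ₁⟩⟨ψ₁|⊗1 + |ψ₂⟩⟨ψ₂|⊗1, |ψ₃⟩⟨ψ₃|⊗1 + |ψ₄⟩⟨ψ₄|⊗1) (identifying ψ₁,ψ₂ with 'first qubit up'). For the maximally mixed initial state ρ = (1/4)·1, the post-measurement reduced state is ρ₁ = |φ⟩⟨φ|, so ΔS = S(ρ) − S(ρ₁) = log 4, while the Shannon entropy of the outcome distribution is H(ρ, F̃) = log 2. Hence ΔS > H(ρ, F̃). -/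
open Matrix Kronecker ComplexOrder

noncomputable def ptraceK {dH dK : Type*} [Fintype dK]
    (M : Matrix (dH × dK) (dH × dK) ℂ) : Matrix dH dH ℂ :=
  Matrix.of fun a b => ∑ j, M (a, j) (b, j)

/-! The swap hands the maximally mixed state `ρ = 1/4` to the ancilla and the pure ancilla state
`Pφ` to the system, so after any ancilla measurement the system is left in `Pφ` and its entropy
drops by `S(1/4) = log 4`. The coarse-grained projectors `Q n` have rank 2, so against the
maximally mixed ancilla each outcome has probability `1/2`, carrying only `log 2`. -/

namespace Matrix.IsHermitian

variable {d : Type*} [Fintype d] [DecidableEq d] {A : Matrix d d ℂ}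

lemma eigenvalues_eq_of_eq_algebraMap (hA : A.IsHermitian) {c : ℝ}
    (hc : A = algebraMap ℝ _ c) (i : d) : hA.eigenvalues i = c := by
  have : Nonempty d := ⟨i⟩
  simpa [hc, spectrum.scalar_eq] using hA.eigenvalues_mem_spectrum_real i

lemma eigenvalues_mem_zero_one (hA : A.IsHermitian) (hidem : IsIdempotentElem A) (i : d) :
    hA.eigenvalues i ∈ ({0, 1} : Set ℝ) :=
  hidem.spectrum_subset ℝ (hA.eigenvalues_mem_spectrum_real i)

end Matrix.IsHermitian

section vonNeumannEntropy

variable {d : Type*} [Fintype d] [DecidableEq d]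

lemma vNE_algebraMap (c : ℝ) :
    vNE (algebraMap ℝ (Matrix d d ℂ) c) = Fintype.card d * Real.negMulLog c := by
  have hA : (algebraMap ℝ (Matrix d d ℂ) c).IsHermitian := (IsSelfAdjoint.all c).algebraMap _
  rw [vNE, dif_pos hA]
  simp [hA.eigenvalues_eq_of_eq_algebraMap rfl]

lemma vNE_eq_zero_of_isIdempotentElem {A : Matrix d d ℂ} (hA : A.IsHermitian)
    (hidem : IsIdempotentElem A) : vNE A = 0 := by
  rw [vNE, dif_pos hA]
  refine Finset.sum_eq_zero fun i _ => ?_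
  obtain h | h : hA.eigenvalues i = 0 ∨ hA.eigenvalues i = 1 := hA.eigenvalues_mem_zero_one hidem i
  all_goals simp [h]

end vonNeumannEntropy

lemma ptraceK_kronecker {dH dK : Type*} [Fintype dK] (A : Matrix dH dH ℂ) (B : Matrix dK dK ℂ) :
    ptraceK (A ⊗ₖ B) = B.trace • A := by
  ext a b
  simp [ptraceK, trace, Finset.mul_sum, mul_comm]

namespace Matrix

def swapMatrix (m n α : Type*) [DecidableEq m] [DecidableEq n] [Zero α] [One α] :
    Matrix (n × m) (m × n) α :=
  of fun p q => if p.1 = q.2 ∧ p.2 = q.1 then 1 else 0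

variable {m n α : Type*} [Fintype m] [Fintype n]

lemma swapMatrix_mul_kronecker_mul_conjTranspose [DecidableEq m] [DecidableEq n]
    [CommSemiring α] [StarRing α] (A : Matrix m m α) (B : Matrix n n α) :
    swapMatrix m n α * (A ⊗ₖ B) * (swapMatrix m n α)ᴴ = B ⊗ₖ A := by
  ext ⟨a, b⟩ ⟨c, d⟩
  simp [swapMatrix, mul_apply, conjTranspose_apply, Fintype.sum_prod_type, ite_and,
    apply_ite star, mul_comm]

lemma one_kronecker_mul_kronecker_mul_one_kronecker [DecidableEq m] [CommSemiring α]
    (Q : Matrix n n α) (A : Matrix m m α) (B : Matrix n n α) :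
    ((1 : Matrix m m α) ⊗ₖ Q) * (A ⊗ₖ B) * (1 ⊗ₖ Q) = A ⊗ₖ (Q * B * Q) := by
  rw [← mul_kronecker_mul, ← mul_kronecker_mul, one_mul, mul_one]

lemma isIdempotentElem_diagonal_ite [DecidableEq n] [Semiring α] (P : n → Prop)
    [DecidablePred P] : IsIdempotentElem (diagonal fun j => if P j then (1 : α) else 0) := by
  rw [IsIdempotentElem, diagonal_mul_diagonal]
  congr
  funext j
  split_ifs <;> simp

lemma one_kronecker_mul_swapMatrix_conj_mul_one_kronecker [DecidableEq m] [DecidableEq n]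
    [CommSemiring α] [StarRing α] {Q : Matrix n n α} (hQ : IsIdempotentElem Q) (c : α)
    (P : Matrix m m α) :
    ((1 : Matrix m m α) ⊗ₖ Q) * (swapMatrix n m α * ((c • 1 : Matrix n n α) ⊗ₖ P) *
      (swapMatrix n m α)ᴴ) * (1 ⊗ₖ Q) = P ⊗ₖ (c • Q) := by
  rw [swapMatrix_mul_kronecker_mul_conjTranspose, one_kronecker_mul_kronecker_mul_one_kronecker,
    Matrix.mul_smul, Matrix.smul_mul, mul_one, hQ.eq]

end Matrix

/-- The counterexample to the Szilard bound for non-pure instruments: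
two-qubit erasure via the swap unitary, with a coarse-grained ancilla observable. -/
theorem counterexample_szilard_bound_nonpure
    (V : Matrix (Fin 4 × Fin 4) (Fin 4 × Fin 4) ℂ)
    (hV : V = Matrix.of fun p q => if p.1 = q.2 ∧ p.2 = q.1 then 1 else 0)
    (Pφ : Matrix (Fin 4) (Fin 4) ℂ) (hPφ : Pφ = Matrix.single 3 3 1)
    (Q : Fin 2 → Matrix (Fin 4) (Fin 4) ℂ)
    (hQ0 : Q 0 = Matrix.diagonal (fun j => if j = 0 ∨ j = 1 then 1 else 0))
    (hQ1 : Q 1 = Matrix.diagonal (fun j => if j = 2 ∨ j = 3 then 1 else 0))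
    (ρ : Matrix (Fin 4) (Fin 4) ℂ) (hρ : ρ = (1/4 : ℂ) • 1)
    (ρ₁ : Matrix (Fin 4) (Fin 4) ℂ)
    (hρ₁ : ρ₁ = ptraceK (∑ n, ((1 : Matrix (Fin 4) (Fin 4) ℂ) ⊗ₖ Q n) *
        (V * (ρ ⊗ₖ Pφ) * Vᴴ) * ((1 : Matrix (Fin 4) (Fin 4) ℂ) ⊗ₖ Q n)))
    (p : Fin 2 → ℝ)
    (hp : ∀ n, p n = ((((1 : Matrix (Fin 4) (Fin 4) ℂ) ⊗ₖ Q n) *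
        (V * (ρ ⊗ₖ Pφ) * Vᴴ) * ((1 : Matrix (Fin 4) (Fin 4) ℂ) ⊗ₖ Q n)).trace).re) :
    ρ₁ = Pφ ∧
      vNE ρ - vNE ρ₁ = Real.log 4 ∧
      ∑ n, Real.negMulLog (p n) = Real.log 2 ∧
      vNE ρ - vNE ρ₁ > ∑ n, Real.negMulLog (p n) := by
  have hQ_idem : ∀ n, IsIdempotentElem (Q n) := Fin.forall_fin_two.2
    ⟨hQ0 ▸ isIdempotentElem_diagonal_ite _, hQ1 ▸ isIdempotentElem_diagonal_ite _⟩
  have hterm : ∀ n, ((1 : Matrix (Fin 4) (Fin 4) ℂ) ⊗ₖ Q n) * (V * (ρ ⊗ₖ Pφ) * Vᴴ) *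
      ((1 : Matrix (Fin 4) (Fin 4) ℂ) ⊗ₖ Q n) = Pφ ⊗ₖ ((1/4 : ℂ) • Q n) := fun n => by
    rw [hρ, hV]
    exact one_kronecker_mul_swapMatrix_conj_mul_one_kronecker (hQ_idem n) _ _
  have hQ_sum : Q 0 + Q 1 = 1 := by
    rw [hQ0, hQ1, diagonal_add, ← diagonal_one]
    congr; funext j; fin_cases j <;> simp
  have hρ₁_eq : ρ₁ = Pφ := by
    rw [hρ₁, Fin.sum_univ_two, hterm, hterm, ← kronecker_add, ← smul_add, hQ_sum,
      ptraceK_kronecker]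
    simp
  have hQ_trace : ∀ n, (Q n).trace = 2 := Fin.forall_fin_two.2
    ⟨by rw [hQ0, trace_diagonal, Fin.sum_univ_four]; norm_num [Fin.ext_iff],
     by rw [hQ1, trace_diagonal, Fin.sum_univ_four]; norm_num [Fin.ext_iff]⟩
  have hp_half : ∀ n, p n = 1/2 := fun n => by
    rw [hp, hterm, trace_kronecker, trace_smul, hQ_trace, hPφ]
    norm_num
  have hρ_alg : ρ = algebraMap ℝ _ (1/4) := by
    rw [hρ, Algebra.algebraMap_eq_smul_one, ← Complex.coe_smul]; norm_num
  obtain ⟨hPφ_herm, hPφ_idem⟩ : Pφ.IsHermitian ∧ IsIdempotentElem Pφ := by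
    simp [hPφ, IsHermitian, IsIdempotentElem]
  have hΔS : vNE ρ - vNE ρ₁ = Real.log 4 := by
    rw [hρ₁_eq, hρ_alg, vNE_algebraMap, vNE_eq_zero_of_isIdempotentElem hPφ_herm hPφ_idem]
    simp [Real.negMulLog, Real.log_inv]
  have hH : ∑ n, Real.negMulLog (p n) = Real.log 2 := by
    simp [hp_half, Real.negMulLog, Real.log_inv]
  refine ⟨hρ₁_eq, hΔS, hH, ?_⟩
  rw [hΔS, hH]
  exact Real.log_lt_log two_pos (by norm_num)
end

section
/- For the imperfect-erasure channel Φ with Kraus operators A₁ = √(5/14)·1, A₂ = diag(−1/√14, 3/√14), A₃ = [[0,0],[2/√7,0]], and the POVM F = (diag(3/7,1), diag(4/7,0)), every diagonal state ρ(p) = diag(p, 1−p), p ∈ [0,1], satisfies the Szilard bound S(ρ(p)) − S(Φ(ρ(p))) ≤ H(ρ(p), F), where H(ρ,F) is the Shannon entropy of the distribution (Tr(ρF₀), Tr(ρF₁)) = (1 − 4p/7, 4p/7). -/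
open Matrix

noncomputable def A₁ : Matrix (Fin 2) (Fin 2) ℂ := ((Real.sqrt (5/14) : ℝ) : ℂ) • 1
noncomputable def A₂ : Matrix (Fin 2) (Fin 2) ℂ :=
  !![((-(1 / Real.sqrt 14) : ℝ) : ℂ), 0; 0, ((3 / Real.sqrt 14 : ℝ) : ℂ)]
noncomputable def A₃ : Matrix (Fin 2) (Fin 2) ℂ :=
  !![0, 0; ((2 / Real.sqrt 7 : ℝ) : ℂ), 0]

noncomputable def Φ (ρ : Matrix (Fin 2) (Fin 2) ℂ) : Matrix (Fin 2) (Fin 2) ℂ :=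
  A₁ * ρ * A₁ᴴ + A₂ * ρ * A₂ᴴ + A₃ * ρ * A₃ᴴ

noncomputable def F₀ : Matrix (Fin 2) (Fin 2) ℂ := !![(3/7 : ℂ), 0; 0, 1]
noncomputable def F₁ : Matrix (Fin 2) (Fin 2) ℂ := !![(4/7 : ℂ), 0; 0, 0]

/-!
Every matrix involved is diagonal, so all three entropies are binary entropies:
`S(ρ(p)) = h(p)`, `S(Φ(ρ(p))) = h(3p/7)` and `H(ρ(p), F) = h(4p/7)`. The claim is then the
case `a = 3/7`, `b = 4/7` of `h(p) ≤ h(a p) + h(b p)` for weights `a + b = 1`, which holds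
summand by summand for `η(x) = -x log x`: `η(a p) ≥ a η(p)` because `η(a p) = a η(p) + p η(a)`,
and `η(1 - a p) ≥ a η(1 - p)` by concavity, as `1 - a p = a (1 - p) + b · 1` and `η(1) = 0`.
-/

open Real

theorem Real.mul_negMulLog_le_negMulLog_mul {w x : ℝ} (hw₀ : 0 ≤ w) (hw₁ : w ≤ 1) (hx : 0 ≤ x) :
    w * negMulLog x ≤ negMulLog (w * x) := by
  rw [negMulLog_mul, mul_comm x]
  nlinarith [negMulLog_nonneg hw₀ hw₁]

theorem Real.mul_negMulLog_one_sub_le_negMulLog_one_sub_mul {w x : ℝ} (hw₀ : 0 ≤ w) (hw₁ : w ≤ 1)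
    (hx : x ≤ 1) : w * negMulLog (1 - x) ≤ negMulLog (1 - w * x) := by
  have h := concaveOn_negMulLog.2 (Set.mem_Ici.2 (sub_nonneg.2 hx)) (Set.mem_Ici.2 zero_le_one)
    hw₀ (sub_nonneg.2 hw₁) (add_sub_cancel w 1)
  simp only [smul_eq_mul, negMulLog_one, mul_zero, add_zero] at h
  rwa [show w * (1 - x) + (1 - w) * 1 = 1 - w * x by ring] at h

theorem Real.binEntropy_le_binEntropy_mul_add_binEntropy_mul {a b p : ℝ} (ha : 0 ≤ a) (hb : 0 ≤ b)
    (hab : a + b = 1) (hp₀ : 0 ≤ p) (hp₁ : p ≤ 1) :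
    binEntropy p ≤ binEntropy (a * p) + binEntropy (b * p) := by
  simp only [binEntropy_eq_negMulLog_add_negMulLog_one_sub]
  have ha₁ : a ≤ 1 := by linarith
  have hb₁ : b ≤ 1 := by linarith
  have hsplit (y : ℝ) : y = a * y + b * y := by rw [← add_mul, hab, one_mul]
  linarith [hsplit (negMulLog p), hsplit (negMulLog (1 - p)),
    mul_negMulLog_le_negMulLog_mul ha ha₁ hp₀, mul_negMulLog_le_negMulLog_mul hb hb₁ hp₀,
    mul_negMulLog_one_sub_le_negMulLog_one_sub_mul ha ha₁ hp₁,
    mul_negMulLog_one_sub_le_negMulLog_one_sub_mul hb hb₁ hp₁]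

theorem Matrix.IsHermitian.map_eigenvalues_diagonal {n : Type*} [Fintype n] [DecidableEq n]
    (a : n → ℝ) (h : (diagonal fun i => (a i : ℂ)).IsHermitian) :
    Multiset.map h.eigenvalues Finset.univ.val = Multiset.map a Finset.univ.val := by
  have hroots := h.roots_charpoly_eq_eigenvalues
  rw [charpoly_diagonal, Polynomial.roots_prod _ _ (Finset.prod_ne_zero_iff.mpr
    fun i _ => Polynomial.X_sub_C_ne_zero _)] at hroots
  simpa [Multiset.map_map, Function.comp_def] using (congrArg (Multiset.map Complex.re) hroots).symm

theorem vNE_diagonal {n : Type*} [Fintype n] [DecidableEq n] (a : n → ℝ) :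
    vNE (diagonal fun i => (a i : ℂ)) = ∑ i, negMulLog (a i) := by
  have h : (diagonal fun i => (a i : ℂ)).IsHermitian :=
    isHermitian_diagonal_iff.2 fun i => Complex.conj_ofReal (a i)
  rw [vNE, dif_pos h]
  change (Finset.univ.val.map (negMulLog ∘ h.eigenvalues)).sum =
    (Finset.univ.val.map (negMulLog ∘ a)).sum
  rw [← Multiset.map_map, ← Multiset.map_map, h.map_eigenvalues_diagonal]

theorem vNE_diagonal_binary (p : ℝ) :
    vNE (diagonal ![(p : ℂ), ((1 - p : ℝ) : ℂ)]) = binEntropy p := by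
  have h : ![(p : ℂ), ((1 - p : ℝ) : ℂ)] = fun i => ((![p, 1 - p] i : ℝ) : ℂ) := by
    ext i; fin_cases i <;> rfl
  rw [h, vNE_diagonal, Fin.sum_univ_two, binEntropy_eq_negMulLog_add_negMulLog_one_sub]
  rfl

theorem Complex.ofReal_sqrt_sq {x : ℝ} (hx : 0 ≤ x) : ((√x : ℝ) : ℂ) ^ 2 = x := by
  rw [← Complex.ofReal_pow, Real.sq_sqrt hx]

theorem A₁_mul_mul_conjTranspose (ρ : Matrix (Fin 2) (Fin 2) ℂ) :
    A₁ * ρ * A₁ᴴ = (5 / 14 : ℂ) • ρ := by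
  have h : star ((√(5 / 14) : ℝ) : ℂ) * ((√(5 / 14) : ℝ) : ℂ) = 5 / 14 := by
    rw [Complex.star_def, Complex.conj_ofReal, ← sq, Complex.ofReal_sqrt_sq (by norm_num)]
    norm_num
  rw [A₁, conjTranspose_smul, conjTranspose_one, Matrix.smul_mul, one_mul, Matrix.mul_smul,
    mul_one, smul_smul, h]

theorem A₂_mul_diagonal_mul_conjTranspose (a b : ℂ) :
    A₂ * diagonal ![a, b] * A₂ᴴ = diagonal ![a / 14, 9 / 14 * b] := by
  have h : ((√14 : ℝ) : ℂ) ^ 2 = 14 := by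
    rw [Complex.ofReal_sqrt_sq (by norm_num)]
    norm_num
  ext i j
  fin_cases i <;> fin_cases j <;>
    simp [A₂, mul_apply, Fin.sum_univ_two, diagonal_apply, -cons_mul] <;>
    field_simp <;> simp only [h, map_ofNat] <;> ring

theorem A₃_mul_diagonal_mul_conjTranspose (a b : ℂ) :
    A₃ * diagonal ![a, b] * A₃ᴴ = diagonal ![0, 4 / 7 * a] := by
  have h : ((√7 : ℝ) : ℂ) ^ 2 = 7 := by
    rw [Complex.ofReal_sqrt_sq (by norm_num)]
    norm_num
  ext i j
  fin_cases i <;> fin_cases j <;>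
    simp [A₃, mul_apply, Fin.sum_univ_two, diagonal_apply, -cons_mul]
  field_simp
  simp only [h, map_ofNat]
  ring

theorem Φ_diagonal (a b : ℂ) : Φ (diagonal ![a, b]) = diagonal ![3 / 7 * a, 4 / 7 * a + b] := by
  rw [Φ, A₁_mul_mul_conjTranspose, A₂_mul_diagonal_mul_conjTranspose,
    A₃_mul_diagonal_mul_conjTranspose, ← diagonal_smul, diagonal_add, diagonal_add]
  congr 1
  ext i
  fin_cases i <;> simp only [Fin.zero_eta, Fin.mk_one, Pi.smul_apply, smul_eq_mul, cons_val_zero,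
    cons_val_one, cons_val_fin_one] <;> ring

theorem Φ_diagonal_binary (p : ℝ) :
    Φ (diagonal ![(p : ℂ), ((1 - p : ℝ) : ℂ)]) =
      diagonal ![((3 / 7 * p : ℝ) : ℂ), ((1 - 3 / 7 * p : ℝ) : ℂ)] := by
  rw [Φ_diagonal]
  push_cast
  ring_nf

theorem trace_diagonal_binary_mul_F₀ (p : ℝ) :
    (diagonal ![(p : ℂ), ((1 - p : ℝ) : ℂ)] * F₀).trace = ((1 - 4 / 7 * p : ℝ) : ℂ) := by
  simp only [trace_fin_two, F₀, diagonal_mul, of_apply, cons_val', cons_val_zero, cons_val_one,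
    cons_val_fin_one]
  push_cast
  ring

theorem trace_diagonal_binary_mul_F₁ (p : ℝ) :
    (diagonal ![(p : ℂ), ((1 - p : ℝ) : ℂ)] * F₁).trace = ((4 / 7 * p : ℝ) : ℂ) := by
  simp only [trace_fin_two, F₁, diagonal_mul, of_apply, cons_val', cons_val_zero, cons_val_one,
    cons_val_fin_one]
  push_cast
  ring

theorem imperfect_erasure_satisfies_szilard_bound
    (p : ℝ) (hp0 : 0 ≤ p) (hp1 : p ≤ 1)
    (ρ : Matrix (Fin 2) (Fin 2) ℂ)
    (hρ : ρ = Matrix.diagonal ![(p : ℂ), ((1 - p : ℝ) : ℂ)]) :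
    vNE ρ - vNE (Φ ρ) ≤
      Real.negMulLog (((ρ * F₀).trace).re) + Real.negMulLog (((ρ * F₁).trace).re) := by
  subst hρ
  rw [Φ_diagonal_binary, vNE_diagonal_binary, vNE_diagonal_binary, trace_diagonal_binary_mul_F₀,
    trace_diagonal_binary_mul_F₁, Complex.ofReal_re, Complex.ofReal_re, add_comm (negMulLog _),
    ← binEntropy_eq_negMulLog_add_negMulLog_one_sub, sub_le_iff_le_add']
  exact binEntropy_le_binEntropy_mul_add_binEntropy_mul (by norm_num) (by norm_num) (by norm_num)
    hp0 hp1
end
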